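/- Let α ∈ ℝ, 1 ≤ s < ∞, λ ≥ 3, let T be an operator, and let f ∈ L^1(ℝ^d) have compact support. Suppose that for every cube Q there is a 1/2-sparse family F_Q of subcubes of Q such that |T(f χ_{Q*})(x)| ≤ C Σ_{R∈F_Q} χ_R(x) |R*|^{α/d} (⨍_{R*} |f|^s)^{1/s} for a.e. x ∈ Q, where Q* = D_λ Q and R* = D_λ R. Then there is a 1/(2λ^d)-sparse family of cubes S = S(f) such that |Tf(x)| ≤ C Σ_{Q∈S} χ_Q(x) |Q|^{α/d} (⨍_Q |f|^s)^{1/s} for a.e. x ∈ ℝ^d. -/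

import Mathlib

open MeasureTheory ENNReal NNReal Set

noncomputable section

/-- A half-open axis-parallel cube in `ℝ^d`, given by its corner and (positive) sidelength. -/
structure Cube (d : ℕ) where
  corner : Fin d → ℝ
  side : ℝ
  side_pos : 0 < side

namespace Cube

variable {d : ℕ}

/-- The set of points of the cube: `[x_1, x_1+l) × ⋯ × [x_d, x_d+l)`. -/
def toSet (Q : Cube d) : Set (Fin d → ℝ) :=
  {y | ∀ i, Q.corner i ≤ y i ∧ y i < Q.corner i + Q.side}

/-- The translate `Q + l(Q) m` of a cube. -/
def translate (Q : Cube d) (m : Fin d → ℤ) : Cube d :=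
  ⟨fun i => Q.corner i + Q.side * (m i : ℝ), Q.side, Q.side_pos⟩

/-- The corner child `x(Q) + (1/2)(Q - x(Q))` of a cube. -/
def cornerChild (Q : Cube d) : Cube d :=
  ⟨Q.corner, Q.side / 2, by have := Q.side_pos; linarith⟩

/-- The threefold expansion `x(Q) + 3(Q - x(Q))` of a cube from its corner. -/
def expand3 (Q : Cube d) : Cube d :=
  ⟨Q.corner, 3 * Q.side, by have := Q.side_pos; linarith⟩

/-- The dilate `D_c Q`: cube with the same center as `Q` and sidelength `c·l(Q)`. -/
def dilate (Q : Cube d) (c : ℝ) (hc : 0 < c) : Cube d :=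
  ⟨fun i => Q.corner i + Q.side / 2 - c * Q.side / 2, c * Q.side, by
    have := Q.side_pos; positivity⟩

end Cube

/-- A dyadic lattice in `ℝ^d`: a family of generations of cubes, each generation formed by
all translates of one of its cubes, and each generation containing a cube whose corner child
belongs to the next generation. -/
structure DyadicLattice (d : ℕ) where
  gen : ℤ → Set (Cube d)
  gen_translates : ∀ k, ∃ Q ∈ gen k, gen k = {R | ∃ m : Fin d → ℤ, R = Q.translate m}
  cornerChild_mem : ∀ k, ∃ Q ∈ gen k, Q.cornerChild ∈ gen (k + 1)

/-- The collection of all cubes of a dyadic lattice. -/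
def DyadicLattice.cubes {d : ℕ} (D : DyadicLattice d) : Set (Cube d) := ⋃ k, D.gen k

/-- The quadrant of a dyadic lattice containing `x`: the union of all cubes of the lattice
containing `x`. -/
def DyadicLattice.quadrant {d : ℕ} (D : DyadicLattice d) (x : Fin d → ℝ) :
    Set (Fin d → ℝ) :=
  ⋃ Q ∈ {Q : Cube d | Q ∈ D.cubes ∧ x ∈ Q.toSet}, Q.toSet

/-- A weight: a locally integrable, a.e. positive (and finite) function. -/
def IsWeight {d : ℕ} (w : (Fin d → ℝ) → ℝ) : Prop :=
  LocallyIntegrable w volume ∧ ∀ᵐ x ∂(volume : Measure (Fin d → ℝ)), 0 < w x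

/-- The measure `w dx` associated to a weight. -/
def wMeasure {d : ℕ} (w : (Fin d → ℝ) → ℝ) : Measure (Fin d → ℝ) :=
  volume.withDensity fun x => ENNReal.ofReal (w x)

/-- `w(E) = ∫_E w dx`. -/
def wInt {d : ℕ} (w : (Fin d → ℝ) → ℝ) (E : Set (Fin d → ℝ)) : ℝ≥0∞ :=
  ∫⁻ x in E, ENNReal.ofReal (w x)

/-- The `L^q` norm (with `q = ∞` allowed) of an `ℝ≥0∞`-valued function. -/
def eLpNormENN {X : Type*} [MeasurableSpace X] (g : X → ℝ≥0∞) (q : ℝ≥0∞)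
    (μ : Measure X) : ℝ≥0∞ :=
  if q = ∞ then essSup g μ
  else (∫⁻ x, g x ^ q.toReal ∂μ) ^ (1 / q.toReal)

/-- The weak `L^q` quasinorm (with `q = ∞` allowed, interpreted as the `L^∞` norm) of an
`ℝ≥0∞`-valued function: `sup_{t>0} t · μ{g > t}^{1/q}`. -/
def wnormENN {X : Type*} [MeasurableSpace X] (g : X → ℝ≥0∞) (q : ℝ≥0∞)
    (μ : Measure X) : ℝ≥0∞ :=
  if q = ∞ then essSup g μ
  else ⨆ t : ℝ≥0, (t : ℝ≥0∞) * μ {x | (t : ℝ≥0∞) < g x} ^ (1 / q.toReal)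

/-- The weighted dyadic fractional maximal operator
`M^D_{α,w} f(x) = sup_{Q ∈ D, x ∈ Q} w(Q)^{α/d-1} ∫_Q |f| w`. -/
def MwDyadic {d : ℕ} (D : DyadicLattice d) (α : ℝ) (w f : (Fin d → ℝ) → ℝ)
    (x : Fin d → ℝ) : ℝ≥0∞ :=
  ⨆ (Q : Cube d) (_ : Q ∈ D.cubes) (_ : x ∈ Q.toSet),
    wInt w Q.toSet ^ (α / (d : ℝ) - 1) *
      ∫⁻ y in Q.toSet, (‖f y‖₊ : ℝ≥0∞) * ENNReal.ofReal (w y)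

/-- The dyadic fractional maximal operator `M^D_α f(x) = sup_{Q ∈ D, x ∈ Q} |Q|^{α/d} ⨍_Q |f|`. -/
def MfracDyadic {d : ℕ} (D : DyadicLattice d) (α : ℝ) (f : (Fin d → ℝ) → ℝ)
    (x : Fin d → ℝ) : ℝ≥0∞ :=
  ⨆ (Q : Cube d) (_ : Q ∈ D.cubes) (_ : x ∈ Q.toSet),
    volume Q.toSet ^ (α / (d : ℝ) - 1) * ∫⁻ y in Q.toSet, (‖f y‖₊ : ℝ≥0∞)

/-- The fractional maximal operator `M_α f(x) = sup_{Q ∋ x} |Q|^{α/d} ⨍_Q |f|`,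
supremum over all cubes containing `x`. -/
def Mfrac {d : ℕ} (α : ℝ) (f : (Fin d → ℝ) → ℝ) (x : Fin d → ℝ) : ℝ≥0∞ :=
  ⨆ (Q : Cube d) (_ : x ∈ Q.toSet),
    volume Q.toSet ^ (α / (d : ℝ) - 1) * ∫⁻ y in Q.toSet, (‖f y‖₊ : ℝ≥0∞)

/-- The weighted fractional maximal operator
`M_{α,w} f(x) = sup_{Q ∋ x} w(Q)^{α/d-1} ∫_Q |f| w`, supremum over all cubes containing `x`. -/
def Mwfrac {d : ℕ} (α : ℝ) (w f : (Fin d → ℝ) → ℝ) (x : Fin d → ℝ) : ℝ≥0∞ :=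
  ⨆ (Q : Cube d) (_ : x ∈ Q.toSet),
    wInt w Q.toSet ^ (α / (d : ℝ) - 1) *
      ∫⁻ y in Q.toSet, (‖f y‖₊ : ℝ≥0∞) * ENNReal.ofReal (w y)

/-- An `η`-sparse collection of cubes: each cube `Q` has a measurable subset `G(Q)` with
`|G(Q)| ≥ η|Q|`, the sets `G(Q)` being pairwise disjoint. -/
def IsSparseCubes {d : ℕ} (η : ℝ) (S : Set (Cube d)) : Prop :=
  ∃ G : Cube d → Set (Fin d → ℝ),
    (∀ Q ∈ S, G Q ⊆ Q.toSet ∧ MeasurableSet (G Q) ∧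
      ENNReal.ofReal η * volume Q.toSet ≤ volume (G Q)) ∧
    S.PairwiseDisjoint G

/-- The sparse operator `A_S^α f(x) = Σ_{Q ∈ S} χ_Q(x) |Q|^{α/d} ⨍_Q |f|`. -/
def sparseOp {d : ℕ} (α : ℝ) (S : Set (Cube d)) (f : (Fin d → ℝ) → ℝ)
    (x : Fin d → ℝ) : ℝ≥0∞ :=
  ∑' Q : S, (Q : Cube d).toSet.indicator
    (fun _ => volume (Q : Cube d).toSet ^ (α / (d : ℝ) - 1) *
      ∫⁻ y in (Q : Cube d).toSet, (‖f y‖₊ : ℝ≥0∞)) x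

/-- The `A_{p,q}^α` constant of a pair of weights:
`[v,w] = sup_Q |Q|^{α/d-1} (∫_Q v^{-p'/p})^{1/p'} (∫_Q w)^{1/q}` where `p' = p/(p-1)`. -/
def apqConst {d : ℕ} (p q α : ℝ) (v w : (Fin d → ℝ) → ℝ) : ℝ≥0∞ :=
  ⨆ Q : Cube d,
    volume Q.toSet ^ (α / (d : ℝ) - 1) *
      (∫⁻ x in Q.toSet, ENNReal.ofReal (v x ^ (-(p / (p - 1)) / p))) ^ ((p - 1) / p) *
      (∫⁻ x in Q.toSet, ENNReal.ofReal (w x)) ^ (1 / q)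

/-- The Muckenhoupt `A_∞` condition: `sup_Q exp(⨍_Q log w⁻¹) · ⨍_Q w < ∞`. -/
def IsAinfty {d : ℕ} (w : (Fin d → ℝ) → ℝ) : Prop :=
  ∃ C : ℝ, ∀ Q : Cube d,
    Real.exp (⨍ x in Q.toSet, Real.log (w x)⁻¹ ∂volume) *
      (⨍ x in Q.toSet, w x ∂volume) ≤ C

/-- The Euclidean norm of a point of `ℝ^d`. -/
def euclNorm {d : ℕ} (x : Fin d → ℝ) : ℝ := Real.sqrt (∑ i, x i ^ 2)

/-- The auxiliary maximal operator `M_{T,λ}` controlling oscillations of truncations of `T`: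
`M_{T,λ} f(x) = sup_{Q ∋ x} ess sup_{x',x'' ∈ Q} |T(fχ_{ℝ^d∖Q*})(x') − T(fχ_{ℝ^d∖Q*})(x'')|`. -/
def MT {d : ℕ} (T : ((Fin d → ℝ) → ℝ) → (Fin d → ℝ) → ℝ) (lam : ℝ) (hlam : 0 < lam)
    (f : (Fin d → ℝ) → ℝ) (x : Fin d → ℝ) : ℝ≥0∞ :=
  ⨆ (Q : Cube d) (_ : x ∈ Q.toSet),
    essSup
      (fun z : (Fin d → ℝ) × (Fin d → ℝ) =>
        (‖T (((Q.dilate lam hlam).toSet)ᶜ.indicator f) z.1 -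
            T (((Q.dilate lam hlam).toSet)ᶜ.indicator f) z.2‖₊ : ℝ≥0∞))
      ((volume.restrict Q.toSet).prod (volume.restrict Q.toSet))

end

/-!
Enclose the support of `f` in a cube `Q₀` and partition `ℝ^d` into the cubes of the triadic
shells around `Q₀`: every cube `P` of this partition satisfies `Q₀ ⊆ D_3 P ⊆ D_λ P`, so
`T f = T (f χ_{P*})` on `P` and the local sparse bound applies there; as the partition is
countable, these almost-everywhere bounds hold simultaneously. The union over `P` of the
families `F_P` is `1/2`-sparse because the `P` are disjoint, and dilating its cubes by `λ`
divides the sparseness constant by `λ^d` while `χ_R ≤ χ_{R*}`.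
-/

open Function

namespace Cube

variable {d : ℕ}

theorem toSet_eq_pi (Q : Cube d) :
    Q.toSet = univ.pi fun i => Ico (Q.corner i) (Q.corner i + Q.side) := by
  ext y
  simp [toSet, mem_pi]

theorem volume_toSet (Q : Cube d) : volume Q.toSet = ENNReal.ofReal (Q.side ^ d) := by
  rw [toSet_eq_pi, volume_pi_pi]
  simp [Real.volume_Ico, ← ENNReal.ofReal_pow Q.side_pos.le]

theorem volume_dilate (Q : Cube d) {c : ℝ} (hc : 0 < c) :
    volume (Q.dilate c hc).toSet = ENNReal.ofReal (c ^ d) * volume Q.toSet := by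
  rw [volume_toSet, volume_toSet, ← ENNReal.ofReal_mul (by positivity), ← mul_pow]
  rfl

theorem dilate_one (Q : Cube d) : Q.dilate 1 one_pos = Q := by
  cases Q
  simp [dilate]

theorem dilate_dilate (Q : Cube d) {a b : ℝ} (ha : 0 < a) (hb : 0 < b) :
    (Q.dilate a ha).dilate b hb = Q.dilate (b * a) (mul_pos hb ha) := by
  simp only [dilate, mk.injEq]
  constructor
  · funext i
    ring
  · ring

theorem dilate_three_pow_succ (Q : Cube d) (m : ℕ) :
    Q.dilate (3 ^ (m + 1)) (by positivity) =
      (Q.dilate (3 ^ m) (by positivity)).dilate 3 three_pos := by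
  rw [dilate_dilate]
  congr 1
  ring

theorem dilate_injective {c : ℝ} (hc : 0 < c) :
    Injective fun Q : Cube d => Q.dilate c hc := by
  rintro ⟨x, l, hl⟩ ⟨x', l', hl'⟩ h
  simp only [dilate, mk.injEq] at h
  obtain ⟨hx, hlc⟩ := h
  obtain rfl : l = l' := mul_left_cancel₀ hc.ne' hlc
  simp only [mk.injEq, and_true]
  funext i
  linarith [congrFun hx i]

theorem toSet_dilate_subset_dilate (Q : Cube d) {a b : ℝ} (ha : 0 < a) (hab : a ≤ b) :
    (Q.dilate a ha).toSet ⊆ (Q.dilate b (ha.trans_le hab)).toSet := by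
  intro y hy i
  obtain ⟨h₁, h₂⟩ := hy i
  have := Q.side_pos
  simp only [dilate] at h₁ h₂ ⊢
  constructor <;> nlinarith

theorem toSet_subset_dilate (Q : Cube d) {c : ℝ} (hc : 1 ≤ c) :
    Q.toSet ⊆ (Q.dilate c (by linarith)).toSet := by
  simpa only [dilate_one] using Q.toSet_dilate_subset_dilate one_pos hc

theorem translate_zero (Q : Cube d) : Q.translate 0 = Q := by
  cases Q
  simp [translate]

theorem translate_translate (Q : Cube d) (e e' : Fin d → ℤ) :
    (Q.translate e).translate e' = Q.translate (e + e') := by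
  simp only [translate, mk.injEq, and_true]
  funext i
  push_cast [Pi.add_apply]
  ring

theorem disjoint_translate (Q : Cube d) {e e' : Fin d → ℤ} (h : e ≠ e') :
    Disjoint (Q.translate e).toSet (Q.translate e').toSet := by
  obtain ⟨i, hi⟩ := Function.ne_iff.1 h
  refine Set.disjoint_left.2 fun y hy hy' => hi ?_
  obtain ⟨h₁, h₂⟩ := hy i
  obtain ⟨h₁', h₂'⟩ := hy' i
  have := Q.side_pos
  simp only [translate] at h₁ h₂ h₁' h₂'
  have hlt : (e i : ℝ) < e' i + 1 := by nlinarith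
  have hlt' : (e' i : ℝ) < e i + 1 := by nlinarith
  norm_cast at hlt hlt'
  omega

theorem exists_translate_of_mem_dilate_three (Q : Cube d) {y : Fin d → ℝ}
    (hy : y ∈ (Q.dilate 3 three_pos).toSet) :
    ∃ e : Fin d → ℤ, (∀ i, |e i| ≤ 1) ∧ y ∈ (Q.translate e).toSet := by
  have hs := Q.side_pos
  refine ⟨fun i => ⌊(y i - Q.corner i) / Q.side⌋, fun i => ?_, fun i => ?_⟩
  · obtain ⟨h₁, h₂⟩ := hy i
    simp only [dilate] at h₁ h₂
    rw [abs_le, Int.le_floor, ← Int.lt_add_one_iff, Int.floor_lt, le_div_iff₀ hs,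
      div_lt_iff₀ hs]
    push_cast
    constructor <;> linarith
  · have h₁ := Int.floor_le ((y i - Q.corner i) / Q.side)
    have h₂ := Int.lt_floor_add_one ((y i - Q.corner i) / Q.side)
    rw [le_div_iff₀ hs] at h₁
    rw [div_lt_iff₀ hs] at h₂
    simp only [translate]
    constructor <;> linarith

theorem toSet_translate_subset_dilate_three (Q : Cube d) {e : Fin d → ℤ}
    (he : ∀ i, |e i| ≤ 1) : (Q.translate e).toSet ⊆ (Q.dilate 3 three_pos).toSet := by
  intro y hy i
  obtain ⟨h₁, h₂⟩ := hy i
  obtain ⟨he₁, he₂⟩ := abs_le.1 (he i)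
  have : (-1 : ℝ) ≤ e i := by exact_mod_cast he₁
  have : (e i : ℝ) ≤ 1 := by exact_mod_cast he₂
  have := Q.side_pos
  simp only [translate, dilate] at h₁ h₂ ⊢
  constructor <;> nlinarith

theorem toSet_subset_dilate_three_translate (Q : Cube d) {e : Fin d → ℤ}
    (he : ∀ i, |e i| ≤ 1) : Q.toSet ⊆ ((Q.translate e).dilate 3 three_pos).toSet := by
  have := (Q.translate e).toSet_translate_subset_dilate_three (e := -e) (by simpa using he)
  rwa [translate_translate, add_neg_cancel, translate_zero] at this

theorem exists_mem_dilate_three_pow (Q : Cube d) (y : Fin d → ℝ) :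
    ∃ m : ℕ, y ∈ (Q.dilate (3 ^ m) (by positivity)).toSet := by
  have hs := Q.side_pos
  set t := ∑ i, |y i - (Q.corner i + Q.side / 2)|
  obtain ⟨m, hm⟩ := pow_unbounded_of_one_lt (2 * t / Q.side) (by norm_num : (1 : ℝ) < 3)
  rw [div_lt_iff₀ hs] at hm
  refine ⟨m, fun i => ?_⟩
  have hi : |y i - (Q.corner i + Q.side / 2)| ≤ t :=
    Finset.single_le_sum (f := fun j => |y j - (Q.corner j + Q.side / 2)|)
      (fun j _ => abs_nonneg _) (Finset.mem_univ i)
  obtain ⟨h₁, h₂⟩ := abs_le.1 hi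
  simp only [dilate]
  constructor <;> linarith

theorem exists_subset_toSet_of_isBounded {K : Set (Fin d → ℝ)} (hK : Bornology.IsBounded K) :
    ∃ Q : Cube d, K ⊆ Q.toSet := by
  obtain ⟨r, hr, hKr⟩ := hK.subset_closedBall_lt 0 0
  refine ⟨⟨fun _ => -r, 3 * r, by positivity⟩, fun y hy i => ?_⟩
  have hyi : |y i| ≤ r := (norm_le_pi_norm y i).trans (mem_closedBall_zero_iff.1 (hKr hy))
  obtain ⟨h₁, h₂⟩ := abs_le.1 hyi
  exact ⟨h₁, by linarith⟩

/-- Level `m` consists of the translates of `D_{3^m} Q` by vectors in `{-1,0,1}^d`: at level `0`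
all `3^d` of them, which tile `D_3 Q`, and at level `m > 0` the `3^d - 1` of them that tile the
shell `D_{3^{m+1}} Q \ D_{3^m} Q`. -/
def shellPartition (Q : Cube d) : Set (Cube d) :=
  (fun p : ℕ × (Fin d → ℤ) => (Q.dilate (3 ^ p.1) (by positivity)).translate p.2) ''
    {p | (∀ i, |p.2 i| ≤ 1) ∧ (p.1 = 0 ∨ p.2 ≠ 0)}

theorem countable_shellPartition (Q : Cube d) : Q.shellPartition.Countable :=
  (Set.to_countable _).image _

theorem exists_mem_shellPartition (Q : Cube d) (y : Fin d → ℝ) :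
    ∃ P ∈ Q.shellPartition, y ∈ P.toSet := by
  obtain ⟨m, hm⟩ := Q.exists_mem_dilate_three_pow y
  induction m with
  | zero =>
    refine ⟨_, ⟨(0, 0), ⟨fun _ => by simp, Or.inl rfl⟩, rfl⟩, ?_⟩
    simpa only [translate_zero] using hm
  | succ m ih =>
    rw [dilate_three_pow_succ] at hm
    obtain ⟨e, he, hye⟩ := exists_translate_of_mem_dilate_three _ hm
    by_cases he₀ : e = 0
    · subst he₀
      rw [translate_zero] at hye
      exact ih hye
    · exact ⟨_, ⟨(m, e), ⟨he, Or.inr he₀⟩, rfl⟩, hye⟩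

theorem disjoint_translate_dilate_three_pow (Q : Cube d) {m m' : ℕ} (hm : m < m')
    {e e' : Fin d → ℤ} (he : ∀ i, |e i| ≤ 1) (he' : e' ≠ 0) :
    Disjoint ((Q.dilate (3 ^ m) (by positivity)).translate e).toSet
      ((Q.dilate (3 ^ m') (by positivity)).translate e').toSet := by
  have hsub : ((Q.dilate (3 ^ m) (by positivity)).translate e).toSet ⊆
      ((Q.dilate (3 ^ m') (by positivity)).translate 0).toSet := by
    rw [translate_zero]
    calc _ ⊆ ((Q.dilate (3 ^ m) (by positivity)).dilate 3 three_pos).toSet :=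
          toSet_translate_subset_dilate_three _ he
      _ = (Q.dilate (3 ^ (m + 1)) (by positivity)).toSet := by rw [dilate_three_pow_succ]
      _ ⊆ _ := toSet_dilate_subset_dilate _ _ (pow_le_pow_right₀ (by norm_num) hm)
  exact ((Q.dilate _ _).disjoint_translate he'.symm).mono_left hsub

theorem pairwiseDisjoint_shellPartition (Q : Cube d) :
    Q.shellPartition.PairwiseDisjoint toSet := by
  rintro _ ⟨⟨m, e⟩, ⟨he, hme⟩, rfl⟩ _ ⟨⟨m', e'⟩, ⟨he', hme'⟩, rfl⟩ hne
  rcases lt_trichotomy m m' with h | rfl | h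
  · exact Q.disjoint_translate_dilate_three_pow h he (hme'.resolve_left (by omega))
  · exact disjoint_translate _ fun h => hne (by simp only at h; rw [h])
  · exact (Q.disjoint_translate_dilate_three_pow h he' (hme.resolve_left (by omega))).symm

theorem subset_dilate_three_of_mem_shellPartition {Q P : Cube d}
    (hP : P ∈ Q.shellPartition) : Q.toSet ⊆ (P.dilate 3 three_pos).toSet := by
  obtain ⟨⟨m, e⟩, ⟨he, -⟩, rfl⟩ := hP
  exact (Q.toSet_subset_dilate (one_le_pow₀ (by norm_num))).trans
    (toSet_subset_dilate_three_translate _ he)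

end Cube

section Sparse

variable {d : ℕ}

theorem IsSparseCubes.biUnion {ι : Type*} {η : ℝ} {s : Set ι} {U : ι → Set (Fin d → ℝ)}
    (hU : s.PairwiseDisjoint U) {F : ι → Set (Cube d)} (hF : ∀ i ∈ s, IsSparseCubes η (F i))
    (hFU : ∀ i ∈ s, ∀ R ∈ F i, R.toSet ⊆ U i) : IsSparseCubes η (⋃ i ∈ s, F i) := by
  classical
  choose! G hG hGdisj using hF
  have hmem : ∀ {Q}, Q ∈ ⋃ i ∈ s, F i → ∃ i ∈ s, Q ∈ F i := fun hQ => by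
    simpa using hQ
  refine ⟨fun Q => if h : ∃ i ∈ s, Q ∈ F i then G h.choose Q else ∅, fun Q hQ => ?_, ?_⟩
  · have h := hmem hQ
    simp only [dif_pos h]
    exact hG _ h.choose_spec.1 _ h.choose_spec.2
  · intro Q hQ Q' hQ' hne
    have h := hmem hQ
    have h' := hmem hQ'
    simp only [onFun, dif_pos h, dif_pos h']
    obtain ⟨hi, hQi⟩ := h.choose_spec
    obtain ⟨hi', hQi'⟩ := h'.choose_spec
    by_cases heq : h.choose = h'.choose
    · rw [heq] at hQi ⊢
      exact hGdisj _ hi' hQi hQi' hne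
    · exact (hU hi hi' heq).mono ((hG _ hi _ hQi).1.trans (hFU _ hi _ hQi))
        ((hG _ hi' _ hQi').1.trans (hFU _ hi' _ hQi'))

theorem IsSparseCubes.image_dilate {η c : ℝ} {S : Set (Cube d)} (hS : IsSparseCubes η S)
    (hc : 1 ≤ c) :
    IsSparseCubes (η / c ^ d) ((fun R : Cube d => R.dilate c (by linarith)) '' S) := by
  have : Nonempty (Cube d) := ⟨⟨0, 1, one_pos⟩⟩
  obtain ⟨G, hG, hGdisj⟩ := hS
  have hinv : ∀ R : Cube d,
      invFun (fun R : Cube d => R.dilate c (by linarith)) (R.dilate c (by linarith)) = R :=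
    leftInverse_invFun (Cube.dilate_injective (by linarith))
  refine ⟨G ∘ invFun fun R : Cube d => R.dilate c (by linarith), ?_, ?_⟩
  · rintro _ ⟨R, hR, rfl⟩
    obtain ⟨hsub, hmeas, hvol⟩ := hG R hR
    simp only [comp_apply, hinv R]
    refine ⟨hsub.trans (R.toSet_subset_dilate hc), hmeas, ?_⟩
    rwa [Cube.volume_dilate, ← mul_assoc, ← ENNReal.ofReal_mul' (by positivity),
      div_mul_cancel₀ _ (by positivity)]
  · rintro _ ⟨R, hR, rfl⟩ _ ⟨R', hR', rfl⟩ hne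
    simp only [onFun, comp_apply, hinv R, hinv R']
    exact hGdisj hR hR' fun h => hne (h ▸ rfl)

theorem tsum_indicator_dilate_le {F S : Set (Cube d)} {c : ℝ} (hc : 1 ≤ c)
    (hFS : ∀ R ∈ F, R.dilate c (by linarith) ∈ S) (a : Cube d → ℝ≥0∞)
    (x : Fin d → ℝ) :
    ∑' R : F, (R : Cube d).toSet.indicator (fun _ => a ((R : Cube d).dilate c (by linarith))) x
      ≤ ∑' Q : S, (Q : Cube d).toSet.indicator (fun _ => a Q) x := by
  let ι : F → S := fun R => ⟨(R : Cube d).dilate c (by linarith), hFS R R.2⟩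
  have hι : Injective ι := fun R R' h =>
    Subtype.ext (Cube.dilate_injective (by linarith) (congrArg Subtype.val h))
  calc _ ≤ ∑' R : F, (ι R : Cube d).toSet.indicator (fun _ => a (ι R)) x :=
        ENNReal.tsum_le_tsum fun R =>
          indicator_le_indicator_of_subset (Cube.toSet_subset_dilate _ hc) (fun _ => zero_le) x
    _ ≤ _ := ENNReal.tsum_comp_le_tsum_of_injective hι
        fun Q : S => (Q : Cube d).toSet.indicator (fun _ => a Q) x

end Sparse

/-- from local sparse domination to global sparse domination. -/
theorem local_to_global_sparse
    {d : ℕ} (α s lam : ℝ) (hlam : 3 ≤ lam)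
    (T : ((Fin d → ℝ) → ℝ) → (Fin d → ℝ) → ℝ) (C : ℝ≥0∞)
    (f : (Fin d → ℝ) → ℝ) (hsupp : HasCompactSupport f)
    (hloc : ∀ Q : Cube d, ∃ F : Set (Cube d),
      (∀ R ∈ F, R.toSet ⊆ Q.toSet) ∧ IsSparseCubes (1 / 2) F ∧
      ∀ᵐ x ∂(volume : Measure (Fin d → ℝ)), x ∈ Q.toSet →
        (‖T ((Q.dilate lam (by linarith)).toSet.indicator f) x‖₊ : ℝ≥0∞) ≤
          C * ∑' R : F, (R : Cube d).toSet.indicator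
            (fun _ =>
              volume ((R : Cube d).dilate lam (by linarith)).toSet ^ (α / (d : ℝ)) *
                ((volume ((R : Cube d).dilate lam (by linarith)).toSet)⁻¹ *
                  ∫⁻ y in ((R : Cube d).dilate lam (by linarith)).toSet,
                    (‖f y‖₊ : ℝ≥0∞) ^ s) ^ (1 / s)) x) :
    ∃ S : Set (Cube d), IsSparseCubes (1 / (2 * lam ^ d)) S ∧
      ∀ᵐ x ∂(volume : Measure (Fin d → ℝ)),
        (‖T f x‖₊ : ℝ≥0∞) ≤
          C * ∑' Q : S, (Q : Cube d).toSet.indicator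
            (fun _ => volume (Q : Cube d).toSet ^ (α / (d : ℝ)) *
              ((volume (Q : Cube d).toSet)⁻¹ *
                ∫⁻ y in (Q : Cube d).toSet, (‖f y‖₊ : ℝ≥0∞) ^ s) ^ (1 / s)) x := by
  have hlam0 : 0 < lam := by linarith
  obtain ⟨Q₀, hfQ₀⟩ := Cube.exists_subset_toSet_of_isBounded
    (hsupp.isCompact.isBounded.subset (subset_tsupport f))
  have hfP : ∀ P ∈ Q₀.shellPartition, (P.dilate lam hlam0).toSet.indicator f = f :=
    fun P hP => indicator_eq_self.2 <| hfQ₀.trans <|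
      (Cube.subset_dilate_three_of_mem_shellPartition hP).trans <|
        P.toSet_dilate_subset_dilate three_pos hlam
  choose F hFsub hFsparse hFbound using hloc
  refine ⟨(fun R => R.dilate lam hlam0) '' ⋃ P ∈ Q₀.shellPartition, F P, ?_, ?_⟩
  · have := (IsSparseCubes.biUnion Q₀.pairwiseDisjoint_shellPartition (fun P _ => hFsparse P)
      (fun P _ => hFsub P)).image_dilate (by linarith : 1 ≤ lam)
    rwa [div_div] at this
  · filter_upwards [(ae_ball_iff Q₀.countable_shellPartition).2 fun P _ => hFbound P] with x hx
    obtain ⟨P, hP, hxP⟩ := Q₀.exists_mem_shellPartition x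
    have hTf := hx P hP hxP
    rw [hfP P hP] at hTf
    refine hTf.trans ?_
    gcongr
    exact tsum_indicator_dilate_le (by linarith)
      (fun R hR => mem_image_of_mem _ (mem_biUnion hP hR)) (fun Q => volume Q.toSet ^ (α / d) *
        ((volume Q.toSet)⁻¹ * ∫⁻ y in Q.toSet, (‖f y‖₊ : ℝ≥0∞) ^ s) ^ (1 / s)) x
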